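/- arXiv:2202.04371 — 3 statements merged into one kernel-verified Lean document; each statement's English description precedes it below -/
import Mathlib

section
/- A matroid M has no minor isomorphic to U_{0,1} ⊕ U_{1,2} ⊕ U_{1,1} if and only if M is an elementary split matroid. -/
open Matroid Set

variable {α : Type*}

/-- The rank of a set `Z` in a matroid `M`: the maximum size of an independent subset of `Z`. -/
noncomputable def mrk (M : Matroid α) (Z : Set α) : ℕ :=
  sSup {n | ∃ I, M.Indep I ∧ I ⊆ Z ∧ I.ncard = n}

/-- Deletion of a set `D` from a matroid `M`. -/
def mdelete (M : Matroid α) (D : Set α) : Matroid α := M ↾ (M.E \ D)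

/-- Contraction of a set `C` in a matroid `M`, defined as `(M✶ \ C)✶`. -/
def mcontract (M : Matroid α) (C : Set α) : Matroid α := (mdelete M✶ C)✶

/-- `N` is a minor of `M` if it is obtained by a contraction followed by a deletion. -/
def IsMinorOf (N M : Matroid α) : Prop := ∃ C D, N = mdelete (mcontract M C) D

/-- `M` is an elementary split matroid: its independent sets are the sets `X ⊆ S` with
`|X| ≤ r` and `|X ∩ H i| ≤ r i` for hyperedges `H i ⊆ S` satisfying (H1). -/
def IsElemSplit (M : Matroid α) : Prop :=
  ∃ (q : ℕ) (H : Fin q → Set α) (r : ℕ) (rr : Fin q → ℕ),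
    M.E.Finite ∧ r ≤ M.E.ncard ∧ (∀ i, H i ⊆ M.E) ∧
    (∀ i j : Fin q, i ≠ j → (H i ∩ H j).ncard + r ≤ rr i + rr j) ∧
    ∀ X, X ⊆ M.E → (M.Indep X ↔ X.ncard ≤ r ∧ ∀ i, (X ∩ H i).ncard ≤ rr i)

/-- `M` is (isomorphic to) the uniform matroid `U_{k,n}`. -/
def IsUnif (M : Matroid α) (k n : ℕ) : Prop :=
  M.E.Finite ∧ M.E.ncard = n ∧ ∀ I, I ⊆ M.E → (M.Indep I ↔ I.ncard ≤ k)

/-- `e` is a loop of `M`. -/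
def IsLoopOf (M : Matroid α) (e : α) : Prop := e ∈ M.E ∧ ¬ M.Indep {e}

/-- `e` is a coloop of `M`, i.e. a loop of the dual. -/
def IsColoopOf (M : Matroid α) (e : α) : Prop := IsLoopOf M✶ e

/-- A set `Z` is cyclic in `M` if the restriction `M | Z` has no coloops. -/
def IsCyclicSet (M : Matroid α) (Z : Set α) : Prop :=
  Z ⊆ M.E ∧ ∀ e ∈ Z, ¬ IsColoopOf (M ↾ Z) e

/-- A proper cyclic flat: a cyclic flat of nonzero rank that is not the ground set. -/
def ProperCyclicFlat (M : Matroid α) (F : Set α) : Prop :=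
  M.IsFlat F ∧ IsCyclicSet M F ∧ mrk M F ≠ 0 ∧ F ≠ M.E

/-- `M` is connected: `r(X) + r(S − X) > r(S)` for every nonempty proper `X ⊆ S`. -/
def ConnectedM (M : Matroid α) : Prop :=
  ∀ X, X ⊆ M.E → X.Nonempty → X ≠ M.E → mrk M M.E < mrk M X + mrk M (M.E \ X)

/-- `M` is (isomorphic to) the matroid `U_{0,1} ⊕ U_{1,2} ⊕ U_{1,1}`. -/
def IsU01U12U11 (M : Matroid α) : Prop :=
  ∃ a b c d : α, ([a, b, c, d] : List α).Nodup ∧ M.E = {a, b, c, d} ∧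
    ∀ X, X ⊆ M.E → (M.Indep X ↔ a ∉ X ∧ ¬ ({b, c} : Set α) ⊆ X)

/-!
Elementary split matroids are closed under deletion and contraction: contracting `C` amounts to
adding a basis `I` of `C` to every independent set, which uses up `|I|` of the bound `r` and
`|I ∩ H i|` of each bound `r i`. The matroid `U_{0,1} ⊕ U_{1,2} ⊕ U_{1,1}` is not elementary split,
so no elementary split matroid has it as a minor.

Conversely, take as hyperedges all nonempty proper cyclic flats `F`, with bounds `r(F)`. A circuit
`C` in a set `X` with `|X| ≤ r(M)` spans such a flat with `r(F) < |C| ≤ |X ∩ F|`, so the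
independent sets are the right ones in every finite matroid. Condition (H1) is where the excluded
minor enters: if it fails for two such flats, some dependent set `A` and cyclic set `Z ⊄ cl(A)`
have a non-spanning union, and a suitable contraction then leaves a loop, a parallel pair and a
coloop.
-/

namespace Set

variable {A B C I : Set α}

lemma ncard_inter_add_ncard_inter_le (hI : I.Finite) :
    (I ∩ A).ncard + (I ∩ B).ncard ≤ I.ncard + (I ∩ (A ∩ B)).ncard := by
  rw [← ncard_union_add_ncard_inter _ _ (hI.subset inter_subset_left) (hI.subset inter_subset_left),
    inter_inter_inter_comm, inter_self]
  gcongr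
  exact union_subset inter_subset_left inter_subset_left

lemma ncard_sdiff_inter_sdiff_add_ncard_inter_le (hAB : (A ∩ B).Finite) (hIC : I ⊆ C) :
    ((A \ C) ∩ (B \ C)).ncard + (I ∩ (A ∩ B)).ncard ≤ (A ∩ B).ncard := by
  have hsub : (A \ C) ∩ (B \ C) ⊆ A ∩ B := inter_subset_inter sdiff_subset sdiff_subset
  rw [← ncard_union_eq ((disjoint_sdiff_left.mono_right hIC).mono inter_subset_left
    inter_subset_left) (hAB.subset hsub) (hAB.subset inter_subset_right)]
  exact ncard_le_ncard (union_subset hsub inter_subset_right) hAB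

end Set

namespace Matroid

variable {M N : Matroid α} {A C F F' I R X Z : Set α} {a b c d : α}

-- Junk value `0` on sets of infinite rank; it is only used in finite matroids.
noncomputable def rk (M : Matroid α) (X : Set α) : ℕ := (M.eRk X).toNat

lemma cast_rk_eq [M.RankFinite] (X : Set α) : (M.rk X : ℕ∞) = M.eRk X :=
  ENat.natCast_toNat (M.isRkFinite_set X).eRk_lt_top.ne

lemma IsBasis'.rk_eq_ncard [M.RankFinite] (hI : M.IsBasis' I X) : M.rk X = I.ncard := by
  rw [rk, ← hI.encard_eq_eRk, ← hI.indep.finite.cast_ncard_eq, ENat.toNat_natCast]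

lemma Indep.rk_eq_ncard [M.RankFinite] (hI : M.Indep I) : M.rk I = I.ncard :=
  hI.isBasis_self.isBasis'.rk_eq_ncard

lemma Indep.ncard_le_rk_of_subset [M.RankFinite] (hI : M.Indep I) (hIX : I ⊆ X) :
    I.ncard ≤ M.rk X := by
  obtain ⟨J, hJ, hIJ⟩ := hI.subset_isBasis'_of_subset hIX
  rw [hJ.rk_eq_ncard]
  exact ncard_le_ncard hIJ hJ.indep.finite

lemma rk_closure_eq (M : Matroid α) (X : Set α) : M.rk (M.closure X) = M.rk X := by
  rw [rk, eRk_closure_eq, rk]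

lemma rk_inter_add_rk_union_le [M.RankFinite] (X Y : Set α) :
    M.rk (X ∩ Y) + M.rk (X ∪ Y) ≤ M.rk X + M.rk Y := by
  have h := M.eRk_inter_add_eRk_union_le X Y
  simp only [← cast_rk_eq] at h
  exact_mod_cast h

lemma IsCircuit.rk_add_one_eq [M.RankFinite] (hC : M.IsCircuit C) : M.rk C + 1 = C.ncard := by
  have h := hC.eRk_add_one_eq
  rw [← cast_rk_eq, ← hC.finite.cast_ncard_eq] at h
  exact_mod_cast h

lemma rk_ground_le_ncard [M.Finite] : M.rk M.E ≤ M.E.ncard := by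
  obtain ⟨B, hB⟩ := M.exists_isBasis M.E
  rw [hB.isBasis'.rk_eq_ncard]
  exact ncard_le_ncard hB.subset M.ground_finite

lemma rk_ground_le_of_forall_indep [M.RankFinite] {r : ℕ}
    (h : ∀ I, M.Indep I → I.ncard ≤ r) : M.rk M.E ≤ r := by
  obtain ⟨B, hB⟩ := M.exists_isBasis M.E
  rw [hB.isBasis'.rk_eq_ncard]
  exact h B hB.indep

def Cyclic (M : Matroid α) (Z : Set α) : Prop := ∀ e ∈ Z, e ∈ M.closure (Z \ {e})

lemma Cyclic.subset_ground (hZ : M.Cyclic Z) : Z ⊆ M.E :=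
  fun e he => M.closure_subset_ground _ (hZ e he)

lemma Cyclic.dep (hZ : M.Cyclic Z) (hne : Z.Nonempty) : M.Dep Z := by
  obtain ⟨e, he⟩ := hne
  exact ⟨fun hI => hI.notMem_closure_sdiff_of_mem he (hZ e he), hZ.subset_ground⟩

lemma IsCircuit.cyclic (hC : M.IsCircuit C) : M.Cyclic C :=
  fun _ he => hC.mem_closure_sdiff_singleton_of_mem he

lemma Cyclic.closure (hZ : M.Cyclic Z) : M.Cyclic (M.closure Z) := by
  intro e he
  by_cases heZ : e ∈ Z
  · exact M.closure_subset_closure (sdiff_subset_sdiff_left (M.subset_closure Z hZ.subset_ground))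
      (hZ e heZ)
  · have hZsub : Z ⊆ M.closure Z \ {e} :=
      fun x hx => ⟨M.subset_closure Z hZ.subset_ground hx, fun h => heZ (h ▸ hx)⟩
    exact M.closure_subset_closure hZsub he

lemma isElemSplit_of_indep_iff [M.Finite] {ι : Type*} [Finite ι] (H : ι → Set α) (r : ℕ)
    (ρ : ι → ℕ) (hH : ∀ i, H i ⊆ M.E)
    (hpair : ∀ i j, i ≠ j → (H i ∩ H j).ncard + M.rk M.E ≤ ρ i + ρ j)
    (hindep : ∀ X ⊆ M.E, M.Indep X ↔ X.ncard ≤ r ∧ ∀ i, (X ∩ H i).ncard ≤ ρ i) :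
    IsElemSplit M := by
  have hr : M.rk M.E ≤ r :=
    rk_ground_le_of_forall_indep fun I hI => ((hindep I hI.subset_ground).1 hI).1
  let e := Finite.equivFin ι
  refine ⟨Nat.card ι, H ∘ e.symm, M.rk M.E, ρ ∘ e.symm, M.ground_finite, rk_ground_le_ncard,
    fun _ => hH _, fun i j hij => hpair _ _ (e.symm.injective.ne hij), fun X hX => ?_⟩
  refine ⟨fun hXi => ⟨hXi.ncard_le_rk_of_subset hX, fun i => ((hindep X hX).1 hXi).2 _⟩,
    fun ⟨hXr, hXH⟩ => (hindep X hX).2 ⟨hXr.trans hr, fun i => ?_⟩⟩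
  simpa using hXH (e i)

def HasU01U12U11Minor (M : Matroid α) : Prop := ∃ N, IsMinorOf N M ∧ IsU01U12U11 N

lemma isU01U12U11_restrict (ha : N.IsLoop a) (hb : N.IsNonloop b) (hc : N.IsNonloop c)
    (hbc : b ≠ c) (hcb : c ∈ N.closure {b}) (hd : d ∈ N.E \ N.closure {b}) :
    IsU01U12U11 (N ↾ {a, b, c, d}) := by
  have hab : a ≠ b := by rintro rfl; exact hb.not_isLoop ha
  have hac : a ≠ c := by rintro rfl; exact hc.not_isLoop ha
  have had : a ≠ d := by rintro rfl; exact hd.2 (ha.mem_closure _)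
  have hbd : b ≠ d := by rintro rfl; exact hd.2 (N.mem_closure_self b)
  have hcd : c ≠ d := by rintro rfl; exact hd.2 hcb
  have hbd_indep : N.Indep {b, d} := by
    rw [pair_comm, (indep_singleton.2 hb).insert_indep_iff_of_notMem (Ne.symm hbd)]
    exact hd
  have hcd_indep : N.Indep {c, d} := by
    rw [pair_comm, (indep_singleton.2 hc).insert_indep_iff_of_notMem (Ne.symm hcd)]
    exact ⟨hd.1, fun h => hd.2 (closure_subset_closure_of_subset_closure
      (singleton_subset_iff.2 hcb) h)⟩
  have hbc_dep : N.Dep {b, c} := by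
    rw [pair_comm, (indep_singleton.2 hb).insert_dep_iff]
    exact ⟨hcb, Ne.symm hbc⟩
  refine ⟨a, b, c, d, by simp [*], rfl, fun X (hX : X ⊆ {a, b, c, d}) => ?_⟩
  rw [restrict_indep_iff, and_iff_left hX]
  refine ⟨fun hX => ⟨fun haX => ha.not_indep_of_mem haX hX,
    fun hbcX => hbc_dep.not_indep (hX.subset hbcX)⟩, fun ⟨haX, hbcX⟩ => ?_⟩
  by_cases hbX : b ∈ X
  · refine hbd_indep.subset fun x hx => ?_
    obtain rfl | rfl | rfl | rfl := hX hx
    exacts [absurd hx haX, .inl rfl, absurd (pair_subset hbX hx) hbcX, .inr rfl]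
  · refine hcd_indep.subset fun x hx => ?_
    obtain rfl | rfl | rfl | rfl := hX hx
    exacts [absurd hx haX, absurd hx hbX, .inl rfl, .inr rfl]

lemma isMinorOf_contract_restrict (hR : R ⊆ (M ／ C).E) : IsMinorOf ((M ／ C) ↾ R) M :=
  ⟨C, (M ／ C).E \ R, by
    show (M ／ C) ↾ R = (M ／ C) ↾ ((M ／ C).E \ ((M ／ C).E \ R))
    rw [sdiff_sdiff_cancel_left hR]⟩

lemma hasU01U12U11Minor_of_contract (ha : (M ／ C).IsLoop a) (hb : (M ／ C).IsNonloop b)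
    (hc : (M ／ C).IsNonloop c) (hbc : b ≠ c) (hcb : c ∈ (M ／ C).closure {b})
    (hd : d ∈ (M ／ C).E \ (M ／ C).closure {b}) : M.HasU01U12U11Minor :=
  ⟨_, isMinorOf_contract_restrict (insert_subset ha.mem_ground <|
    insert_subset hb.mem_ground <| pair_subset hc.mem_ground hd.1),
    isU01U12U11_restrict ha hb hc hbc hcb hd⟩

/- Extend a basis `I` of `A` to a basis `B` of `I ∪ Z` and pick `b ∈ B \ I`. Contracting `B \ {b}`
turns an element of `A \ I` into a loop and `b` into a nonloop parallel to some other `c ∈ Z`, while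
any `d ∉ cl(A ∪ Z)` stays outside `cl {b}`. -/
lemma hasU01U12U11Minor_of_dep_of_cyclic (hA : M.Dep A) (hZ : M.Cyclic Z)
    (hZA : ¬ Z ⊆ M.closure A) (hAZ : M.closure (A ∪ Z) ≠ M.E) : M.HasU01U12U11Minor := by
  obtain ⟨I, hI⟩ := M.exists_isBasis' A
  obtain ⟨a, haA, haI⟩ : ∃ a ∈ A, a ∉ I :=
    not_subset.1 fun h => hA.not_indep (hI.indep.subset h)
  have haclI : a ∈ M.closure I := by
    rw [hI.closure_eq_closure]
    exact M.mem_closure_of_mem' haA (hA.subset_ground haA)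
  obtain ⟨B, hB, hIB⟩ := hI.indep.subset_isBasis'_of_subset (subset_union_left (t := Z))
  have hclB : M.closure B = M.closure (A ∪ Z) := by
    rw [hB.closure_eq_closure, ← closure_union_closure_left_eq, hI.closure_eq_closure,
      closure_union_closure_left_eq]
  obtain ⟨b, hbB, hbI⟩ : ∃ b ∈ B, b ∉ I := not_subset.1 fun hBI => hZA <| by
    rw [← hI.closure_eq_closure, hIB.antisymm hBI, hclB]
    exact M.subset_closure_of_subset' subset_union_right hZ.subset_ground
  have hbZ : b ∈ Z := (hB.subset hbB).resolve_left hbI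
  set C := B \ {b}
  have hCE : C ⊆ M.E := sdiff_subset.trans hB.indep.subset_ground
  have hbC : b ∉ M.closure C := hB.indep.notMem_closure_sdiff_of_mem hbB
  have hinsert : {b} ∪ C = B := by
    rw [singleton_union, insert_sdiff_singleton, insert_eq_of_mem hbB]
  obtain ⟨c, hcZ, hcb, hcC⟩ : ∃ c ∈ Z, c ≠ b ∧ c ∉ M.closure C := by
    by_contra! h
    exact hbC (closure_subset_closure_of_subset_closure (fun x hx => h x hx.1 hx.2) (hZ b hbZ))
  obtain ⟨d, hdE, hdB⟩ : ∃ d ∈ M.E, d ∉ M.closure B :=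
    not_subset.1 fun h => hAZ (by rw [← hclB]; exact (M.closure_subset_ground B).antisymm h)
  have ha : (M ／ C).IsLoop a := contract_isLoop_iff_mem_closure.2
    ⟨M.closure_subset_closure (subset_sdiff_singleton hIB hbI) haclI, fun haC =>
      (hI.indep.insert_dep_iff.2 ⟨haclI, haI⟩).not_indep
        (hB.indep.subset (insert_subset haC.1 hIB))⟩
  have hb : (M ／ C).IsNonloop b := contract_isNonloop_iff.2 ⟨hB.indep.subset_ground hbB, hbC⟩
  have hc : (M ／ C).IsNonloop c := contract_isNonloop_iff.2 ⟨hZ.subset_ground hcZ, hcC⟩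
  have hcb' : c ∈ (M ／ C).closure {b} := by
    rw [contract_closure_eq, hinsert, hclB]
    exact ⟨M.subset_closure _ (union_subset hA.subset_ground hZ.subset_ground) (.inr hcZ),
      fun h => hcC (M.subset_closure C hCE h)⟩
  have hd : d ∈ (M ／ C).E \ (M ／ C).closure {b} := by
    rw [contract_closure_eq, hinsert]
    exact ⟨⟨hdE, fun h => hdB (M.closure_subset_closure sdiff_subset (M.subset_closure C hCE h))⟩,
      fun h => hdB h.1⟩
  exact hasU01U12U11Minor_of_contract ha hb hc hcb.symm hcb' hd

lemma closure_union_eq_ground_of_not_hasU01U12U11Minor (hM : ¬ M.HasU01U12U11Minor)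
    (hF : M.IsFlat F) (hFc : M.Cyclic F) (hFne : F.Nonempty) (hF'c : M.Cyclic F')
    (hF'F : ¬ F' ⊆ F) : M.closure (F ∪ F') = M.E := by
  by_contra h
  exact hM (hasU01U12U11Minor_of_dep_of_cyclic (hFc.dep hFne) hF'c (by rwa [hF.closure]) h)

lemma ncard_inter_add_rk_le_of_not_hasU01U12U11Minor [M.Finite] (hM : ¬ M.HasU01U12U11Minor)
    (hF : M.IsFlat F) (hFc : M.Cyclic F) (hFne : F.Nonempty) (hFE : F ≠ M.E)
    (hF' : M.IsFlat F') (hF'c : M.Cyclic F') (hF'ne : F'.Nonempty) (hF'E : F' ≠ M.E)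
    (hFF' : F ≠ F') : (F ∩ F').ncard + M.rk M.E ≤ M.rk F + M.rk F' := by
  wlog hF'F : ¬ F' ⊆ F generalizing F F'
  · rw [inter_comm, add_comm (M.rk F)]
    exact this hF' hF'c hF'ne hF'E hF hFc hFne hFE hFF'.symm
      fun hFF'' => hFF' (hFF''.antisymm (not_not.1 hF'F))
  by_contra! hlt
  have hspan := closure_union_eq_ground_of_not_hasU01U12U11Minor hM hF hFc hFne hF'c hF'F
  have hsub := M.rk_inter_add_rk_union_le F F'
  rw [← rk_closure_eq M (F ∪ F'), hspan] at hsub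
  have hdep : M.Dep (F ∩ F') := by
    refine ⟨fun hI => ?_, inter_subset_left.trans hF.subset_ground⟩
    rw [hI.rk_eq_ncard] at hsub
    omega
  refine hM (hasU01U12U11Minor_of_dep_of_cyclic hdep hF'c (fun h => hF'F ?_) ?_)
  · exact h.trans ((M.closure_subset_closure inter_subset_left).trans hF.closure.subset)
  · rwa [union_eq_self_of_subset_left inter_subset_right, hF'.closure]

lemma indep_of_forall_ncard_inter_le_rk [M.Finite] (hX : X ⊆ M.E) (hXr : X.ncard ≤ M.rk M.E)
    (hXF : ∀ F, M.IsFlat F → M.Cyclic F → F.Nonempty → F ≠ M.E → (X ∩ F).ncard ≤ M.rk F) :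
    M.Indep X := by
  by_contra hXi
  obtain ⟨C, hCX, hC⟩ := (show M.Dep X from ⟨hXi, hX⟩).exists_isCircuit_subset
  have hCcl : C ⊆ M.closure C := M.subset_closure C hC.subset_ground
  have hrk : M.rk (M.closure C) + 1 = C.ncard := by rw [rk_closure_eq, hC.rk_add_one_eq]
  have hCX' : C.ncard ≤ X.ncard := ncard_le_ncard hCX (M.ground_finite.subset hX)
  have hCF : C.ncard ≤ (X ∩ M.closure C).ncard :=
    ncard_le_ncard (subset_inter hCX hCcl) (M.ground_finite.subset (inter_subset_left.trans hX))
  have := hXF _ (M.isFlat_closure C) hC.cyclic.closure (hC.nonempty.mono hCcl)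
    (fun h => by rw [h] at hrk; omega)
  omega

theorem isElemSplit_of_not_hasU01U12U11Minor [M.Finite] (hM : ¬ M.HasU01U12U11Minor) :
    IsElemSplit M := by
  set 𝓕 := {F | M.IsFlat F ∧ M.Cyclic F ∧ F.Nonempty ∧ F ≠ M.E}
  have : Finite 𝓕 :=
    (M.ground_finite.finite_subsets.subset fun F hF => hF.1.subset_ground).to_subtype
  refine isElemSplit_of_indep_iff (Subtype.val : 𝓕 → Set α) (M.rk M.E) (fun F => M.rk F)
    (fun F => F.2.1.subset_ground) ?_ fun X hX => ⟨fun hXi => ?_, fun ⟨hXr, hXF⟩ => ?_⟩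
  · rintro ⟨F, hF, hFc, hFne, hFE⟩ ⟨F', hF', hF'c, hF'ne, hF'E⟩ hne
    exact ncard_inter_add_rk_le_of_not_hasU01U12U11Minor hM hF hFc hFne hFE hF' hF'c hF'ne hF'E
      (fun h => hne (Subtype.ext h))
  · exact ⟨hXi.ncard_le_rk_of_subset hX,
      fun F => (hXi.subset inter_subset_left).ncard_le_rk_of_subset inter_subset_right⟩
  · exact indep_of_forall_ncard_inter_le_rk hX hXr fun F h1 h2 h3 h4 => hXF ⟨F, h1, h2, h3, h4⟩

lemma IsElemSplit.delete (h : IsElemSplit M) (D : Set α) : IsElemSplit (M ＼ D) := by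
  obtain ⟨q, H, r, ρ, hfin, -, hH, hpair, hindep⟩ := h
  have : M.Finite := ⟨hfin⟩
  have hr : (M ＼ D).rk (M ＼ D).E ≤ r := rk_ground_le_of_forall_indep fun I hI =>
    ((hindep I hI.of_delete.subset_ground).1 hI.of_delete).1
  refine isElemSplit_of_indep_iff (fun i => H i \ D) r ρ (fun i => sdiff_subset_sdiff_left (hH i))
    (fun i j hij => ?_) (fun X hX => ?_)
  · have : ((H i \ D) ∩ (H j \ D)).ncard ≤ (H i ∩ H j).ncard :=
      ncard_le_ncard (inter_subset_inter sdiff_subset sdiff_subset)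
        (hfin.subset (inter_subset_left.trans (hH i)))
    have := hpair i j hij
    omega
  · have hXD : Disjoint X D := disjoint_sdiff_left.mono_left hX
    simp only [delete_indep_iff, and_iff_left hXD, hindep X (hX.trans sdiff_subset),
      inter_sdiff_distrib_left, hXD.inter_eq, sdiff_empty]

lemma IsElemSplit.contract (h : IsElemSplit M) (C : Set α) : IsElemSplit (M ／ C) := by
  obtain ⟨q, H, r, ρ, hfin, -, hH, hpair, hindep⟩ := h
  have : M.Finite := ⟨hfin⟩
  obtain ⟨I, hI⟩ := M.exists_isBasis' C
  have hIfin : I.Finite := hI.indep.finite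
  obtain ⟨hIr, hIρ⟩ := (hindep I hI.indep.subset_ground).1 hI.indep
  have hindep' : ∀ X ⊆ M.E \ C, (M ／ C).Indep X ↔
      X.ncard + I.ncard ≤ r ∧ ∀ i, (X ∩ (H i \ C)).ncard + (I ∩ H i).ncard ≤ ρ i := by
    intro X hX
    have hXC : Disjoint X C := disjoint_sdiff_left.mono_left hX
    have hXI : Disjoint X I := hXC.mono_right hI.subset
    have hXfin : X.Finite := hfin.subset (hX.trans sdiff_subset)
    rw [hI.contract_indep_iff, and_iff_left hXC.symm,
      hindep _ (union_subset (hX.trans sdiff_subset) hI.indep.subset_ground),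
      ncard_union_eq hXI hXfin hIfin]
    simp_rw [union_inter_distrib_right, inter_sdiff_distrib_left, hXC.inter_eq, sdiff_empty]
    exact and_congr_right fun _ => forall_congr' fun i => by
      rw [ncard_union_eq (hXI.mono inter_subset_left inter_subset_left)
        (hXfin.subset inter_subset_left) (hIfin.subset inter_subset_left)]
  have hr : (M ／ C).rk (M ／ C).E + I.ncard ≤ r := by
    have := rk_ground_le_of_forall_indep (r := r - I.ncard) fun J hJ => by
      have := ((hindep' J hJ.subset_ground).1 hJ).1
      omega
    omega
  refine isElemSplit_of_indep_iff (fun i => H i \ C) (r - I.ncard)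
    (fun i => ρ i - (I ∩ H i).ncard) (fun i => sdiff_subset_sdiff_left (hH i))
    (fun i j hij => ?_) (fun X hX => ?_)
  · have hIij := ncard_inter_add_ncard_inter_le (A := H i) (B := H j) hIfin
    have hHij := ncard_sdiff_inter_sdiff_add_ncard_inter_le (B := H j)
      (hfin.subset (inter_subset_left.trans (hH i))) hI.subset
    have := hpair i j hij
    have := hIρ i
    have := hIρ j
    omega
  · rw [hindep' X hX]
    exact and_congr (by omega) (forall_congr' fun i => by have := hIρ i; omega)

-- `{a}` needs a hyperedge with bound `0` and `{b, c}` one with bound `1`, so (H1) for this pair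
-- would force `r ≤ 1`, yet `{b, d}` is independent.
lemma IsU01U12U11.not_isElemSplit (hM : IsU01U12U11 M) : ¬ IsElemSplit M := by
  obtain ⟨a, b, c, d, hnd, hE, hindep⟩ := hM
  simp only [List.nodup_cons, List.mem_cons, List.not_mem_nil, or_false,
    List.nodup_nil, and_true, not_or] at hnd
  obtain ⟨⟨hab, hac, had⟩, ⟨hbc, hbd⟩, hcd⟩ := hnd
  rintro ⟨q, H, r, ρ, -, -, -, hpair, hsplit⟩
  have hiff : ∀ X ⊆ ({a, b, c, d} : Set α),
      (X.ncard ≤ r ∧ ∀ i, (X ∩ H i).ncard ≤ ρ i) ↔ a ∉ X ∧ ¬ ({b, c} : Set α) ⊆ X :=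
    fun X hX => by rw [← hsplit X (hE ▸ hX), hindep X (hE ▸ hX)]
  have hr : 2 ≤ r := by
    have := ((hiff {b, d} (by simp [pair_subset_iff])).2 ⟨by simp [hab, had], fun h => ?_⟩).1
    · rwa [ncard_pair hbd] at this
    · obtain rfl | rfl := h (mem_insert_of_mem b rfl) <;> simp_all
  have hsingle : ∀ x ∈ ({b, c} : Set α), ∀ i, ({x} ∩ H i).ncard ≤ ρ i := by
    rintro x hx i
    refine ((hiff {x} ?_).2 ⟨?_, fun h => ?_⟩).2 i
    · obtain rfl | rfl := hx <;> simp
    · obtain rfl | rfl := hx <;> simpa [eq_comm]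
    · exact hbc ((h (mem_insert b _)).trans (h (mem_insert_of_mem b rfl)).symm)
  obtain ⟨i, hi⟩ : ∃ i, ρ i < ({a} ∩ H i).ncard := by
    by_contra! h
    exact ((hiff {a} (by simp)).1 ⟨by rw [ncard_singleton]; omega, h⟩).1 rfl
  obtain ⟨j, hj⟩ : ∃ j, ρ j < ({b, c} ∩ H j).ncard := by
    by_contra! h
    exact ((hiff {b, c} (by simp [pair_subset_iff])).1 ⟨by rw [ncard_pair hbc]; omega, h⟩).2
      subset_rfl
  have hi0 : ρ i = 0 := by
    have := ncard_le_ncard (inter_subset_left (s := {a}) (t := H i))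
    rw [ncard_singleton] at this
    omega
  have hj1 : ρ j ≤ 1 := by
    have := ncard_le_ncard (inter_subset_left (s := {b, c}) (t := H j))
    rw [ncard_pair hbc] at this
    omega
  have hj0 : 0 < ρ j := by
    have : ({b, c} ∩ H j).ncard ≤ ({b} ∩ H j).ncard + ({c} ∩ H j).ncard := by
      rw [insert_eq, union_inter_distrib_right]
      exact ncard_union_le _ _
    have := hsingle b (mem_insert b _) j
    have := hsingle c (mem_insert_of_mem b rfl) j
    omega
  have := hpair i j (by rintro rfl; omega)
  omega

end Matroid

theorem stmt11 {α : Type*} (M : Matroid α) (hfin : M.E.Finite) :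
    (¬ ∃ N : Matroid α, IsMinorOf N M ∧ IsU01U12U11 N) ↔ IsElemSplit M := by
  have : M.Finite := ⟨hfin⟩
  refine ⟨isElemSplit_of_not_hasU01U12U11Minor, ?_⟩
  rintro h ⟨N, ⟨C, D, rfl⟩, hN⟩
  exact hN.not_isElemSplit ((h.contract C).delete D)
end

section
/- A loopless, coloopless, disconnected matroid whose proper cyclic flats form a clutter is the direct sum of exactly two uniform matroids. -/
open Matroid Set

variable {α : Type*}

/-! If `r(S) + r(E - S) ≤ r(E)`, a basis of `S` and a basis of `E - S` together form a basis
of `M`, so `M` is the direct sum of its restrictions to `S` and `E - S`. Without loops and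
coloops both sides are then proper cyclic flats. A dependent subset of `S` with at most `r(S)`
elements contains a circuit `C`, and `cl(C)` is a proper cyclic flat of rank `|C| - 1 < r(S)`
inside `S`, which the clutter condition forbids; so `M ↾ S` is uniform of rank `r(S)`. -/

variable {M : Matroid α} {B C I J S X : Set α} {e : α}

lemma isLoopOf_iff : IsLoopOf M e ↔ M.IsLoop e := by
  rw [IsLoopOf, ← singleton_dep, Dep, singleton_subset_iff, and_comm]

lemma isColoopOf_iff : IsColoopOf M e ↔ M.IsColoop e :=
  isLoopOf_iff

lemma isCyclicSet_of_forall_exists_isBasis (hX : X ⊆ M.E)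
    (h : ∀ e ∈ X, ∃ B, M.IsBasis B X ∧ e ∉ B) : IsCyclicSet M X := by
  refine ⟨hX, fun e he hcol => ?_⟩
  obtain ⟨B, hB, heB⟩ := h e he
  exact heB ((isColoopOf_iff.1 hcol).mem_of_isBase ((isBase_restrict_iff hX).2 hB))

lemma Matroid.IsCircuit.isCyclicSet_closure (hC : M.IsCircuit C) :
    IsCyclicSet M (M.closure C) := by
  obtain ⟨f, hf⟩ := hC.nonempty
  have hbasis : ∀ x ∈ C, M.IsBasis (C \ {x}) (M.closure C) :=
    fun x hx => (hC.sdiff_singleton_isBasis hx).isBasis_closure_right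
  refine isCyclicSet_of_forall_exists_isBasis (M.closure_subset_ground C) fun e _ => ?_
  by_cases heC : e ∈ C
  · exact ⟨_, hbasis e heC, fun h => h.2 rfl⟩
  · exact ⟨_, hbasis f hf, fun h => heC h.1⟩

section RankFinite

variable [M.RankFinite]

lemma Matroid.IsBasis'.mrk_eq_ncard (hI : M.IsBasis' I X) : mrk M X = I.ncard := by
  refine IsGreatest.csSup_eq ⟨⟨I, hI.indep, hI.subset, rfl⟩, ?_⟩
  rintro _ ⟨J, hJ, hJX, rfl⟩
  obtain ⟨J', hJ', hJJ'⟩ := hJ.subset_isBasis'_of_subset hJX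
  calc J.ncard ≤ J'.ncard := ncard_le_ncard hJJ' hJ'.indep.finite
    _ = I.ncard := by rw [ncard_def, ncard_def, hJ'.encard_eq_encard hI]

lemma Matroid.IsBasis.mrk_eq_ncard (hI : M.IsBasis I X) : mrk M X = I.ncard :=
  hI.isBasis'.mrk_eq_ncard

lemma Matroid.Indep.ncard_le_mrk (hI : M.Indep I) (hIX : I ⊆ X) : I.ncard ≤ mrk M X := by
  obtain ⟨J, hJ, hIJ⟩ := hI.subset_isBasis'_of_subset hIX
  rw [hJ.mrk_eq_ncard]
  exact ncard_le_ncard hIJ hJ.indep.finite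

lemma mrk_mono {Y : Set α} (hXY : X ⊆ Y) : mrk M X ≤ mrk M Y := by
  obtain ⟨I, hI⟩ := M.exists_isBasis' X
  rw [hI.mrk_eq_ncard]
  exact hI.indep.ncard_le_mrk (hI.subset.trans hXY)

lemma mrk_le_ncard (hX : X.Finite) : mrk M X ≤ X.ncard := by
  obtain ⟨I, hI⟩ := M.exists_isBasis' X
  rw [hI.mrk_eq_ncard]
  exact ncard_le_ncard hI.subset hX

lemma mrk_ne_zero [M.Loopless] (hX : X ⊆ M.E) (hne : X.Nonempty) : mrk M X ≠ 0 := by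
  obtain ⟨e, he⟩ := hne
  have h := (M.isNonloop_of_loopless (hX he)).indep.ncard_le_mrk (singleton_subset_iff.2 he)
  rw [ncard_singleton] at h
  omega

lemma Matroid.IsCircuit.mrk_closure_add_one (hC : M.IsCircuit C) :
    mrk M (M.closure C) + 1 = C.ncard := by
  obtain ⟨e, he⟩ := hC.nonempty
  rw [(hC.sdiff_singleton_isBasis he).isBasis_closure_right.mrk_eq_ncard,
    ncard_sdiff_singleton_add_one he hC.finite]

lemma Matroid.IsCircuit.properCyclicFlat_closure [M.Loopless] (hC : M.IsCircuit C)
    (hCE : C.ncard ≤ mrk M M.E) : ProperCyclicFlat M (M.closure C) := by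
  have hrk := hC.mrk_closure_add_one
  have hne : (M.closure C).Nonempty := hC.nonempty.mono (M.subset_closure C hC.subset_ground)
  refine ⟨M.isFlat_closure C, hC.isCyclicSet_closure,
    mrk_ne_zero (M.closure_subset_ground C) hne, fun h => ?_⟩
  rw [h] at hrk
  omega

lemma Matroid.Indep.union_of_mrk_add_le (hsep : mrk M S + mrk M (M.E \ S) ≤ mrk M M.E)
    (hS : S ⊆ M.E) (hI : M.Indep I) (hIS : I ⊆ S) (hJ : M.Indep J) (hJS : J ⊆ M.E \ S) :
    M.Indep (I ∪ J) := by
  obtain ⟨B₁, hB₁, hIB₁⟩ := hI.subset_isBasis_of_subset hIS hS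
  obtain ⟨B₂, hB₂, hJB₂⟩ := hJ.subset_isBasis_of_subset hJS sdiff_subset
  obtain ⟨K, hK⟩ :=
    M.exists_isBasis (B₁ ∪ B₂) (union_subset hB₁.indep.subset_ground hB₂.indep.subset_ground)
  have hspan : M.closure (B₁ ∪ B₂) = M.E := by
    rw [← closure_union_closure_left_eq, ← closure_union_closure_right_eq,
      hB₁.closure_eq_closure, hB₂.closure_eq_closure, closure_union_closure_left_eq,
      closure_union_closure_right_eq, union_sdiff_cancel hS, closure_ground]
  have hKE : M.IsBasis K M.E := hspan ▸ hK.isBasis_closure_right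
  have hcard : (B₁ ∪ B₂).ncard ≤ K.ncard :=
    calc (B₁ ∪ B₂).ncard ≤ B₁.ncard + B₂.ncard := ncard_union_le _ _
      _ ≤ K.ncard := by rwa [← hB₁.mrk_eq_ncard, ← hB₂.mrk_eq_ncard, ← hKE.mrk_eq_ncard]
  have hKeq : K = B₁ ∪ B₂ :=
    eq_of_subset_of_ncard_le hK.subset hcard (hB₁.indep.finite.union hB₂.indep.finite)
  exact (hKeq ▸ hK.indep).subset (union_subset_union hIB₁ hJB₂)

lemma Matroid.IsBase.isBasis_inter_of_mrk_add_le (hsep : mrk M S + mrk M (M.E \ S) ≤ mrk M M.E)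
    (hS : S ⊆ M.E) (hB : M.IsBase B) : M.IsBasis (B ∩ S) S := by
  obtain ⟨B₁, hB₁, hsub⟩ :=
    (hB.indep.subset inter_subset_left).subset_isBasis_of_subset inter_subset_right hS
  have hind : M.Indep (B₁ ∪ B ∩ (M.E \ S)) := hB₁.indep.union_of_mrk_add_le hsep hS
    hB₁.subset (hB.indep.subset inter_subset_left) inter_subset_right
  have hBB₁ : B ⊆ B₁ ∪ B ∩ (M.E \ S) := fun x hx => by
    by_cases hxS : x ∈ S
    · exact Or.inl (hsub ⟨hx, hxS⟩)
    · exact Or.inr ⟨hx, hB.subset_ground hx, hxS⟩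
  have hB₁B : B₁ ⊆ B ∩ S :=
    subset_inter ((hB.eq_of_subset_indep hind hBB₁).symm ▸ subset_union_left) hB₁.subset
  rwa [hsub.antisymm hB₁B]

lemma Matroid.IsColoop.of_restrict_of_mrk_add_le
    (hsep : mrk M S + mrk M (M.E \ S) ≤ mrk M M.E) (hS : S ⊆ M.E) (he : (M ↾ S).IsColoop e) :
    M.IsColoop e :=
  isColoop_iff_forall_mem_isBase.2 fun _ hB =>
    (he.mem_of_isBase ((isBase_restrict_iff hS).2 (hB.isBasis_inter_of_mrk_add_le hsep hS))).1

lemma isFlat_of_mrk_add_le [M.Loopless] (hsep : mrk M S + mrk M (M.E \ S) ≤ mrk M M.E)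
    (hS : S ⊆ M.E) : M.IsFlat S := by
  refine isFlat_iff_closure_eq.2 (subset_antisymm (fun e he => ?_) (M.subset_closure S hS))
  by_contra heS
  obtain ⟨I, hI⟩ := M.exists_isBasis S hS
  have heE : e ∈ M.E \ S := ⟨mem_ground_of_mem_closure he, heS⟩
  have hind := hI.indep.union_of_mrk_add_le hsep hS hI.subset
    (M.isNonloop_of_loopless heE.1).indep (singleton_subset_iff.2 heE)
  rw [union_singleton, hI.indep.insert_indep_iff_of_notMem (fun h => heS (hI.subset h)),
    hI.closure_eq_closure] at hind
  exact hind.2 he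

lemma properCyclicFlat_of_mrk_add_le [M.Loopless] [M✶.Loopless]
    (hsep : mrk M S + mrk M (M.E \ S) ≤ mrk M M.E) (hS : S ⊆ M.E) (hne : S.Nonempty)
    (hne' : (M.E \ S).Nonempty) : ProperCyclicFlat M S := by
  refine ⟨isFlat_of_mrk_add_le hsep hS, ⟨hS, fun e _ hcol => M✶.not_isLoop e ?_⟩,
    mrk_ne_zero hS hne, fun h => by simp [h] at hne'⟩
  exact (isColoopOf_iff.1 hcol).of_restrict_of_mrk_add_le hsep hS

lemma indep_iff_of_mrk_add_le {k₁ k₂ n₁ n₂ : ℕ} (hsep : mrk M S + mrk M (M.E \ S) ≤ mrk M M.E)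
    (hS : S ⊆ M.E) (h₁ : IsUnif (M ↾ S) k₁ n₁) (h₂ : IsUnif (M ↾ (M.E \ S)) k₂ n₂)
    (hX : X ⊆ M.E) :
    M.Indep X ↔ (X ∩ S).ncard ≤ k₁ ∧ (X ∩ (M.E \ S)).ncard ≤ k₂ := by
  simp only [IsUnif, restrict_ground_eq, restrict_indep_iff] at h₁ h₂
  refine ⟨fun hXI => ⟨(h₁.2.2 _ inter_subset_right).1 ⟨hXI.subset inter_subset_left,
    inter_subset_right⟩, (h₂.2.2 _ inter_subset_right).1 ⟨hXI.subset inter_subset_left,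
    inter_subset_right⟩⟩, fun ⟨hX₁, hX₂⟩ => ?_⟩
  have hunion := ((h₁.2.2 _ inter_subset_right).2 hX₁).1.union_of_mrk_add_le hsep hS
    inter_subset_right ((h₂.2.2 _ inter_subset_right).2 hX₂).1 inter_subset_right
  rwa [← inter_union_distrib_left, union_sdiff_cancel hS, inter_eq_self_of_subset_left hX] at hunion

end RankFinite

lemma isUnif_restrict_of_isFlat [M.Finite] [M.Loopless] (hS : M.IsFlat S)
    (hmin : ∀ F, ProperCyclicFlat M F → F ⊆ S → F = S) :
    IsUnif (M ↾ S) (mrk M S) S.ncard := by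
  have hSfin : S.Finite := M.ground_finite.subset hS.subset_ground
  refine ⟨hSfin, rfl, fun X (hXS : X ⊆ S) =>
    ⟨fun hX => (restrict_indep_iff.1 hX).1.ncard_le_mrk hXS, fun hX => restrict_indep_iff.2 ⟨?_, hXS⟩⟩⟩
  by_contra hdep
  obtain ⟨C, hCX, hC⟩ :=
    ((not_indep_iff (hXS.trans hS.subset_ground)).1 hdep).exists_isCircuit_subset
  have hCS : C.ncard ≤ mrk M S := (ncard_le_ncard hCX (hSfin.subset hXS)).trans hX
  have hF := hC.properCyclicFlat_closure (hCS.trans (mrk_mono hS.subset_ground))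
  have hFS : M.closure C = S :=
    hmin _ hF (hS.closure ▸ M.closure_subset_closure (hCX.trans hXS))
  have hrk := hC.mrk_closure_add_one
  rw [hFS] at hrk
  omega

lemma isUnif_restrict_of_mrk_add_le [M.Finite] [M.Loopless] [M✶.Loopless]
    (hclutter : ∀ X Y, ProperCyclicFlat M X → ProperCyclicFlat M Y → X ⊆ Y → X = Y)
    (hsep : mrk M S + mrk M (M.E \ S) ≤ mrk M M.E) (hS : S ⊆ M.E) (hne : S.Nonempty)
    (hne' : (M.E \ S).Nonempty) : IsUnif (M ↾ S) (mrk M S) S.ncard :=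
  isUnif_restrict_of_isFlat (isFlat_of_mrk_add_le hsep hS)
    fun F hF hFS => hclutter F S hF (properCyclicFlat_of_mrk_add_le hsep hS hne hne') hFS

theorem stmt13 {α : Type*} (M : Matroid α) (hfin : M.E.Finite)
    (hloopless : ∀ e, ¬ IsLoopOf M e) (hcoloopless : ∀ e, ¬ IsColoopOf M e)
    (hdisconnected : ¬ ConnectedM M)
    (hclutter : ∀ X Y, ProperCyclicFlat M X → ProperCyclicFlat M Y → X ⊆ Y → X = Y) :
    ∃ (S₁ S₂ : Set α) (k₁ k₂ : ℕ), S₁.Nonempty ∧ S₂.Nonempty ∧ Disjoint S₁ S₂ ∧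
      S₁ ∪ S₂ = M.E ∧ k₁ ≤ S₁.ncard ∧ k₂ ≤ S₂.ncard ∧
      ∀ X, X ⊆ M.E → (M.Indep X ↔ (X ∩ S₁).ncard ≤ k₁ ∧ (X ∩ S₂).ncard ≤ k₂) := by
  have : M.Finite := ⟨hfin⟩
  have : M.Loopless := loopless_iff_forall_not_isLoop.2 fun e _ => isLoopOf_iff.not.1 (hloopless e)
  have : M✶.Loopless :=
    loopless_iff_forall_not_isLoop.2 fun e _ => isColoopOf_iff.not.1 (hcoloopless e)
  obtain ⟨S, hSE, hne, hSne, hsep⟩ : ∃ S, S ⊆ M.E ∧ S.Nonempty ∧ S ≠ M.E ∧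
      mrk M S + mrk M (M.E \ S) ≤ mrk M M.E := by
    simpa [ConnectedM] using hdisconnected
  have hne' : (M.E \ S).Nonempty := sdiff_nonempty.2 fun h => hSne (hSE.antisymm h)
  have hsep' : mrk M (M.E \ S) + mrk M (M.E \ (M.E \ S)) ≤ mrk M M.E := by
    rwa [sdiff_sdiff_cancel_left hSE, add_comm]
  have hne'' : (M.E \ (M.E \ S)).Nonempty := by rwa [sdiff_sdiff_cancel_left hSE]
  exact ⟨S, M.E \ S, mrk M S, mrk M (M.E \ S), hne, hne', disjoint_sdiff_right,
    union_sdiff_cancel hSE, mrk_le_ncard (hfin.subset hSE), mrk_le_ncard (hfin.subset sdiff_subset),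
    fun X hX => indep_iff_of_mrk_add_le hsep hSE
      (isUnif_restrict_of_mrk_add_le hclutter hsep hSE hne hne')
      (isUnif_restrict_of_mrk_add_le hclutter hsep' sdiff_subset hne' hne'') hX⟩
end

section
/- Every paving matroid is an elementary split matroid. Specifically, if M is a rank-r paving matroid with bases {X ⊆ S : |X| = r, X ⊄ H_i for all i} for a family of proper subsets H_1,...,H_q with pairwise intersections of size at most r − 2, then M is the elementary split matroid given by hyperedges H_i with r_i = r − 1 for all i. -/
open Matroid Set

variable {α : Type*}

/-! A set of size at most `r` meeting every `H i` in at most `r - 1` points extends, one element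
at a time, to an `r`-set with the same property, which is a base. The only obstruction to adding
an element arises when `X` already has `r - 1` points inside some `H i₀`; then any element outside
`H i₀` works, because `X` meets every other `H j` inside `H i₀ ∩ H j`, of size at most `r - 2`. -/

section Augmentation

variable {E X : Set α} {ι : Type*} {H : ι → Set α} {r : ℕ}

lemma ncard_insert_inter_le (e : α) (X S : Set α) :
    (insert e X ∩ S).ncard ≤ (X ∩ S).ncard + 1 := by
  by_cases he : e ∈ S
  · rw [insert_inter_of_mem he]
    exact ncard_insert_le e _
  · rw [insert_inter_of_notMem he]
    omega

lemma exists_insert_ncard_inter_le (hE : E.Finite) (hH : ∀ i, H i ⊂ E)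
    (hint : ∀ i j, i ≠ j → (H i ∩ H j).ncard + 2 ≤ r) (hrE : r ≤ E.ncard) (hXE : X ⊆ E)
    (hXr : X.ncard < r) (hX : ∀ i, (X ∩ H i).ncard ≤ r - 1) :
    ∃ e ∈ E \ X, ∀ i, (insert e X ∩ H i).ncard ≤ r - 1 := by
  by_cases htight : ∃ i₀, (X ∩ H i₀).ncard = r - 1
  · obtain ⟨i₀, hi₀⟩ := htight
    have hXH : X ⊆ H i₀ := inter_eq_left.mp <|
      eq_of_subset_of_ncard_le inter_subset_left (by omega) (hE.subset hXE)
    obtain ⟨e, heE, heH⟩ := exists_of_ssubset (hH i₀)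
    refine ⟨e, ⟨heE, fun heX => heH (hXH heX)⟩, fun j => ?_⟩
    rcases eq_or_ne j i₀ with rfl | hj
    · rw [insert_inter_of_notMem heH]
      exact hX j
    · have hXj : (X ∩ H j).ncard ≤ (H i₀ ∩ H j).ncard :=
        ncard_le_ncard (inter_subset_inter_left _ hXH)
          ((hE.subset (hH i₀).subset).inter_of_left _)
      have := hint i₀ j hj.symm
      have := ncard_insert_inter_le e X (H j)
      omega
  · simp only [not_exists] at htight
    obtain ⟨e, heE, heX⟩ :=
      exists_mem_notMem_of_ncard_lt_ncard (by omega : X.ncard < E.ncard) (hE.subset hXE)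
    refine ⟨e, ⟨heE, heX⟩, fun i => ?_⟩
    have := hX i
    have := htight i
    have := ncard_insert_inter_le e X (H i)
    omega

lemma exists_superset_ncard_eq (hE : E.Finite) (hH : ∀ i, H i ⊂ E)
    (hint : ∀ i j, i ≠ j → (H i ∩ H j).ncard + 2 ≤ r) (hrE : r ≤ E.ncard) (hXE : X ⊆ E)
    (hXr : X.ncard ≤ r) (hX : ∀ i, (X ∩ H i).ncard ≤ r - 1) :
    ∃ Y, X ⊆ Y ∧ Y ⊆ E ∧ Y.ncard = r ∧ ∀ i, (Y ∩ H i).ncard ≤ r - 1 := by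
  induction hn : r - X.ncard generalizing X with
  | zero => exact ⟨X, subset_rfl, hXE, by omega, hX⟩
  | succ n ih =>
    obtain ⟨e, ⟨heE, heX⟩, he⟩ :=
      exists_insert_ncard_inter_le hE hH hint hrE hXE (by omega) hX
    have hcard := ncard_insert_of_notMem heX (hE.subset hXE)
    obtain ⟨Y, hXY, hY⟩ := ih (insert_subset heE hXE) (by omega) he (by omega)
    exact ⟨Y, (subset_insert e X).trans hXY, hY⟩

end Augmentation

lemma indep_iff_of_isBase_iff {M : Matroid α} {ι : Type*} {H : ι → Set α} {r : ℕ}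
    (hfin : M.E.Finite) (hH : ∀ i, H i ⊂ M.E) (hrS : r ≤ M.E.ncard)
    (hint : ∀ i j, i ≠ j → (H i ∩ H j).ncard + 2 ≤ r)
    (hbase : ∀ X, X ⊆ M.E → (M.IsBase X ↔ X.ncard = r ∧ ∀ i, ¬ X ⊆ H i))
    {X : Set α} (hXE : X ⊆ M.E) :
    M.Indep X ↔ X.ncard ≤ r ∧ ∀ i, (X ∩ H i).ncard ≤ r - 1 := by
  constructor
  · intro hX
    obtain ⟨B, hB, hXB⟩ := hX.exists_isBase_superset
    have hBfin : B.Finite := hfin.subset hB.subset_ground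
    obtain ⟨hBr, hBH⟩ := (hbase B hB.subset_ground).mp hB
    refine ⟨hBr ▸ ncard_le_ncard hXB hBfin, fun i => ?_⟩
    have hlt : (B ∩ H i).ncard < B.ncard :=
      ncard_lt_ncard (inter_ssubset_left_iff.mpr (hBH i)) hBfin
    have := ncard_le_ncard (inter_subset_inter_left (H i) hXB) (hBfin.inter_of_left _)
    omega
  · rintro ⟨hXr, hX⟩
    rcases Nat.eq_zero_or_pos r with rfl | hr
    · rw [(ncard_eq_zero (hfin.subset hXE)).mp (by omega)]
      exact M.empty_indep
    obtain ⟨Y, hXY, hYE, hYr, hY⟩ := exists_superset_ncard_eq hfin hH hint hrS hXE hXr hX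
    refine (((hbase Y hYE).mpr ⟨hYr, fun i hYH => ?_⟩).indep).subset hXY
    have := hY i
    rw [inter_eq_left.mpr hYH] at this
    omega

theorem stmt15 {α : Type*} (M : Matroid α) (hfin : M.E.Finite) (q r : ℕ)
    (H : Fin q → Set α) (hH : ∀ i, H i ⊂ M.E) (hrS : r ≤ M.E.ncard)
    (hint : ∀ i j : Fin q, i ≠ j → (H i ∩ H j).ncard + 2 ≤ r)
    (hbase : ∀ X, X ⊆ M.E → (M.IsBase X ↔ X.ncard = r ∧ ∀ i, ¬ X ⊆ H i)) :
    (∀ X, X ⊆ M.E → (M.Indep X ↔ X.ncard ≤ r ∧ ∀ i, (X ∩ H i).ncard ≤ r - 1)) ∧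
      IsElemSplit M := by
  have hindep : ∀ X, X ⊆ M.E → _ :=
    fun _ => indep_iff_of_isBase_iff hfin hH hrS hint hbase
  refine ⟨hindep, q, H, r, fun _ => r - 1, hfin, hrS, fun i => (hH i).subset,
    fun i j hij => ?_, hindep⟩
  have := hint i j hij
  dsimp only
  omega
end
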